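/- Let n ≥ 1, let P be an n × n matrix over 𝔽₂ with P Pᵀ = I, let G be the associated bipartite graph on V = L ⊔ R, fix i ∈ L, and let D ⊆ R be a set with |D ∩ N_i| odd. Let K_D' = X_D Z_{Odd(D)\{i}}, where Odd(D) is computed in G. Then K_D' |G \ i⟩ = |G \ i⟩ and K_D' ( Z_{N_i} |G \ i⟩ ) = − Z_{N_i} |G \ i⟩; that is, K_D' distinguishes the two encoded basis states |G\i⟩ and Z_{N_i}|G\i⟩ by its ±1 eigenvalue. -/

import Mathlib

open Matrix

/-- The bipartite graph on `Fin n ⊕ Fin n` (left copy `L = Sum.inl`, right copy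
`R = Sum.inr`) in which `Sum.inl a` is adjacent to `Sum.inr b` iff `P a b = 1`,
and there are no other edges. -/
def bipGraph (n : ℕ) (P : Matrix (Fin n) (Fin n) (ZMod 2)) :
    SimpleGraph (Fin n ⊕ Fin n) where
  Adj u v := (∃ a b, P a b = 1 ∧ u = Sum.inl a ∧ v = Sum.inr b) ∨
             (∃ a b, P a b = 1 ∧ u = Sum.inr b ∧ v = Sum.inl a)
  symm := by
    constructor
    rintro u v (⟨a, b, h, rfl, rfl⟩ | ⟨a, b, h, rfl, rfl⟩)
    · exact Or.inr ⟨a, b, h, rfl, rfl⟩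
    · exact Or.inl ⟨a, b, h, rfl, rfl⟩
  loopless := by
    constructor
    rintro u (⟨a, b, h, rfl, h2⟩ | ⟨a, b, h, rfl, h2⟩) <;> simp at h2

/-- The odd neighbourhood of a set `S`: the set of vertices `v` such that the number
of neighbours of `v` lying in `S` is odd. -/
def oddNbhd {V : Type*} (G : SimpleGraph V) (S : Set V) : Set V :=
  {v | Odd (G.neighborSet v ∩ S).ncard}

/-- The quadratic form of a graph: `q(x) = ∑_{{u,v} ∈ E(H)} x_u x_v` over `𝔽₂`. -/
noncomputable def qForm {W : Type*} (H : SimpleGraph W) (x : W → ZMod 2) : ZMod 2 :=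
  ∑ᶠ e ∈ H.edgeSet, Sym2.lift ⟨fun u v => x u * x v, fun _ _ => mul_comm _ _⟩ e

/-- The graph state of `H`: the vector in `ℂ^(W → ZMod 2)` with amplitude
`2^{-|W|/2} (-1)^{q(x)}` at the basis label `x`. -/
noncomputable def graphState {W : Type*} (H : SimpleGraph W) : (W → ZMod 2) → ℂ :=
  fun x => (Real.sqrt 2 : ℂ)⁻¹ ^ Nat.card W * (-1 : ℂ) ^ (qForm H x).val

/-- The Pauli operator `X_S = ∏_{w ∈ S} X_w`, acting by `(X_S ψ)(x) = ψ(x + 1_S)`. -/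
noncomputable def XOp {W : Type*} (S : Set W) (ψ : (W → ZMod 2) → ℂ) : (W → ZMod 2) → ℂ :=
  fun x => ψ (x + S.indicator 1)

/-- The Pauli operator `Z_S = ∏_{w ∈ S} Z_w`, acting by
`(Z_S ψ)(x) = (-1)^{∑_{w ∈ S} x_w} ψ(x)`. -/
noncomputable def ZOp {W : Type*} (S : Set W) (ψ : (W → ZMod 2) → ℂ) : (W → ZMod 2) → ℂ :=
  fun x => (-1 : ℂ) ^ (∑ᶠ w ∈ S, (x w).val) * ψ x

/-!
For an independent set `S` of a graph `H`, the operator `X_S Z_{Odd(S)}` fixes `|H⟩`: the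
quadratic form satisfies `q(x + 1_S) = q(x) + ∑_{v ∈ Odd(S)} x_v` because `q(1_S) = 0`, and
`Odd(S)` is disjoint from `S`, so the two signs cancel. In `G \ i` the set `D ⊆ R` is
independent, and its odd neighbourhood there is `Odd(D) \ {i}`. Since `|D ∩ N_i|` is odd,
`X_D` anticommutes with `Z_{N_i}`, which turns the eigenvalue `+1` into `-1`.
-/

section Sign

variable {R : Type*} [Ring R]

lemma neg_one_pow_natCast_val (m : ℕ) : (-1 : R) ^ (m : ZMod 2).val = (-1) ^ m := by
  rw [ZMod.val_natCast, ← neg_one_pow_eq_pow_mod_two]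

lemma neg_one_pow_val_add (a b : ZMod 2) :
    (-1 : R) ^ (a + b).val = (-1) ^ a.val * (-1) ^ b.val := by
  rw [ZMod.val_add, ← neg_one_pow_eq_pow_mod_two, pow_add]

lemma neg_one_pow_finsum_val {α : Type*} [Finite α] (T : Set α) (x : α → ZMod 2) :
    (-1 : R) ^ (∑ᶠ w ∈ T, (x w).val) = (-1) ^ (∑ᶠ w ∈ T, x w).val := by
  rw [← neg_one_pow_natCast_val, Nat.cast_finsum_mem T.toFinite]
  simp only [ZMod.natCast_zmod_val]

end Sign

lemma finsum_mem_indicator_one {α M : Type*} [Finite α] [AddCommMonoidWithOne M]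
    (S T : Set α) :
    ∑ᶠ w ∈ T, S.indicator (1 : α → M) w = (T ∩ S).ncard := by
  rw [← finsum_one, Nat.cast_finsum_mem (T ∩ S).toFinite, finsum_mem_def, finsum_mem_def]
  simp only [Set.indicator_indicator, Pi.one_def, Nat.cast_one]

lemma ZOp_apply {W : Type*} [Finite W] (T : Set W) (ψ : (W → ZMod 2) → ℂ)
    (x : W → ZMod 2) :
    ZOp T ψ x = (-1) ^ (∑ᶠ w ∈ T, x w).val * ψ x := by
  rw [ZOp, neg_one_pow_finsum_val]

lemma ZOp_comm {W : Type*} (S T : Set W) (ψ : (W → ZMod 2) → ℂ) :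
    ZOp S (ZOp T ψ) = ZOp T (ZOp S ψ) :=
  funext fun _ => mul_left_comm (G := ℂ) _ _ _

lemma XOp_ZOp {W : Type*} [Finite W] (S T : Set W) (ψ : (W → ZMod 2) → ℂ) :
    XOp S (ZOp T ψ) = (-1 : ℂ) ^ (T ∩ S).ncard • ZOp T (XOp S ψ) := by
  funext x
  simp only [XOp, ZOp_apply, Pi.smul_apply, smul_eq_mul, Pi.add_apply,
    finsum_mem_add_distrib T.toFinite, finsum_mem_indicator_one, neg_one_pow_val_add,
    neg_one_pow_natCast_val]
  ring

namespace SimpleGraph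

open Finset

variable {W M : Type*} [Fintype W] (H : SimpleGraph W) [DecidableRel H.Adj] [AddCommMonoid M]

theorem sum_dart_eq_sum_neighborFinset (f : W → W → M) :
    ∑ d : H.Dart, f d.fst d.snd = ∑ v, ∑ u ∈ H.neighborFinset v, f v u := by
  classical
  rw [← sum_fiberwise_of_maps_to (g := fun d : H.Dart => d.fst) (t := univ)
    fun _ _ => mem_univ _]
  refine sum_congr rfl fun v _ => ?_
  simp only [H.dart_fst_fiber v]
  rw [sum_image fun _ _ _ _ h => H.dartOfNeighborSet_injective v h,
    neighborFinset_def, ← sum_set_coe]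
  rfl

theorem sum_dart_eq_sum_edgeFinset (f : W → W → M) :
    ∑ d : H.Dart, f d.fst d.snd = ∑ e ∈ H.edgeFinset,
      Sym2.lift ⟨fun u v => f u v + f v u, fun _ _ => add_comm _ _⟩ e := by
  classical
  rw [← sum_fiberwise_of_maps_to (g := fun d : H.Dart => d.edge) (t := H.edgeFinset)
    fun d _ => mem_edgeFinset.mpr d.edge_mem]
  refine sum_congr rfl fun e he => ?_
  obtain ⟨u, v⟩ := e
  let d : H.Dart := ⟨(u, v), mem_edgeFinset.mp he⟩
  change ∑ d' : H.Dart with d'.edge = d.edge, _ = _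
  rw [d.edge_fiber, sum_pair d.symm_ne.symm]
  rfl

end SimpleGraph

section QuadraticForm

open Finset SimpleGraph

theorem qForm_eq_sum_edgeFinset {W : Type*} [Fintype W] (H : SimpleGraph W)
    [DecidableRel H.Adj] (x : W → ZMod 2) :
    qForm H x =
      ∑ e ∈ H.edgeFinset, Sym2.lift ⟨fun u v => x u * x v, fun _ _ => mul_comm _ _⟩ e := by
  rw [qForm, ← finsum_mem_coe_finset, coe_edgeFinset]

theorem qForm_add {W : Type*} [Fintype W] (H : SimpleGraph W) [DecidableRel H.Adj]
    (x y : W → ZMod 2) :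
    qForm H (x + y) = qForm H x + qForm H y + ∑ v, x v * ∑ u ∈ H.neighborFinset v, y u := by
  calc qForm H (x + y)
      = ∑ e ∈ H.edgeFinset, (Sym2.lift ⟨fun u v => x u * x v, fun _ _ => mul_comm _ _⟩ e +
          Sym2.lift ⟨fun u v => y u * y v, fun _ _ => mul_comm _ _⟩ e +
          Sym2.lift ⟨fun u v => x u * y v + x v * y u, fun _ _ => add_comm _ _⟩ e) := by
        rw [qForm_eq_sum_edgeFinset]
        refine sum_congr rfl fun e _ => ?_
        obtain ⟨u, v⟩ := e
        simp only [Sym2.lift_mk, Pi.add_apply]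
        ring
    _ = qForm H x + qForm H y + ∑ d : H.Dart, x d.fst * y d.snd := by
        rw [sum_add_distrib, sum_add_distrib, qForm_eq_sum_edgeFinset, qForm_eq_sum_edgeFinset]
        exact congrArg _ (H.sum_dart_eq_sum_edgeFinset fun u v => x u * y v).symm
    _ = _ := by
        refine congrArg _ ((H.sum_dart_eq_sum_neighborFinset fun v u => x v * y u).trans ?_)
        simp_rw [mul_sum]

theorem qForm_add_indicator {W : Type*} [Finite W] (H : SimpleGraph W) (x : W → ZMod 2)
    (S : Set W) :
    qForm H (x + S.indicator 1) =
      qForm H x + qForm H (S.indicator 1) + ∑ᶠ v ∈ oddNbhd H S, x v := by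
  cases nonempty_fintype W
  classical
  rw [qForm_add, finsum_mem_def, finsum_eq_sum_of_fintype]
  refine congrArg _ (sum_congr rfl fun v _ => ?_)
  rw [← finsum_mem_coe_finset, coe_neighborFinset, finsum_mem_indicator_one, Set.indicator_apply]
  by_cases h : v ∈ oddNbhd H S
  · rw [if_pos h, ZMod.natCast_eq_one_iff_odd.2 h, mul_one]
  · rw [if_neg h, ZMod.natCast_eq_zero_iff_even.2 (Nat.not_odd_iff_even.1 h), mul_zero]

end QuadraticForm

theorem qForm_indicator_of_isIndepSet {W : Type*} {H : SimpleGraph W} {S : Set W}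
    (hS : H.IsIndepSet S) : qForm H (S.indicator 1) = 0 := by
  refine finsum_mem_eq_zero_of_forall_eq_zero fun e he => ?_
  obtain ⟨u, v⟩ := e
  by_cases hu : u ∈ S
  · by_cases hv : v ∈ S
    · exact absurd he (hS hu hv he.ne)
    · simp [hv]
  · simp [hu]

theorem disjoint_oddNbhd_of_isIndepSet {V : Type*} {G : SimpleGraph V} {S : Set V}
    (hS : G.IsIndepSet S) : Disjoint (oddNbhd G S) S := by
  refine Set.disjoint_left.2 fun v hv hvS => ?_
  have hempty : G.neighborSet v ∩ S = ∅ :=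
    Set.eq_empty_of_forall_notMem fun u ⟨hvu, hu⟩ => hS hvS hu hvu.ne hvu
  simp [oddNbhd, hempty] at hv

theorem XOp_ZOp_oddNbhd_graphState {W : Type*} [Finite W] {H : SimpleGraph W} {S : Set W}
    (hS : H.IsIndepSet S) : XOp S (ZOp (oddNbhd H S) (graphState H)) = graphState H := by
  funext x
  have hsum : ∑ᶠ w ∈ oddNbhd H S, (x + S.indicator (1 : W → ZMod 2)) w =
      ∑ᶠ w ∈ oddNbhd H S, x w := by
    simp only [Pi.add_apply]
    rw [finsum_mem_add_distrib (Set.toFinite _), finsum_mem_indicator_one,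
      (disjoint_oddNbhd_of_isIndepSet hS).inter_eq, Set.ncard_empty, Nat.cast_zero, add_zero]
  simp only [XOp, ZOp_apply, graphState, hsum, qForm_add_indicator,
    qForm_indicator_of_isIndepSet hS, add_zero]
  rw [mul_left_comm, ← neg_one_pow_val_add, add_comm (qForm H x), ← add_assoc,
    CharTwo.add_self_eq_zero, zero_add]

theorem Set.ncard_preimage_val_of_subset {α : Type*} {s t : Set α} (h : t ⊆ s) :
    (Subtype.val ⁻¹' t : Set s).ncard = t.ncard :=
  Set.ncard_preimage_of_injective_subset_range Subtype.val_injective (Subtype.range_coe ▸ h)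

theorem SimpleGraph.IsIndepSet.preimage_val_induce {V : Type*} {G : SimpleGraph V}
    {s D : Set V} (hD : G.IsIndepSet D) : (G.induce s).IsIndepSet (Subtype.val ⁻¹' D) :=
  fun _ hu _ hv huv => hD hu hv (Subtype.val_injective.ne huv)

theorem oddNbhd_induce {V : Type*} (G : SimpleGraph V) {s D : Set V} (hD : D ⊆ s) :
    oddNbhd (G.induce s) (Subtype.val ⁻¹' D) = Subtype.val ⁻¹' oddNbhd G D := by
  ext v
  have hcard : ((G.induce s).neighborSet v ∩ Subtype.val ⁻¹' D).ncard =
      (G.neighborSet v ∩ D).ncard :=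
    Set.ncard_preimage_val_of_subset (Set.inter_subset_right.trans hD)
  simp only [oddNbhd, Set.mem_ofPred_eq, Set.mem_preimage, hcard]

theorem isIndepSet_range_inr_bipGraph (n : ℕ) (P : Matrix (Fin n) (Fin n) (ZMod 2)) :
    (bipGraph n P).IsIndepSet (Set.range Sum.inr) := by
  rintro _ ⟨a, rfl⟩ _ ⟨b, rfl⟩ - (⟨_, _, _, h, _⟩ | ⟨_, _, _, _, h⟩) <;> cases h

theorem stmt10_general (n : ℕ) (P : Matrix (Fin n) (Fin n) (ZMod 2))
    (i : Fin n) (D : Set (Fin n ⊕ Fin n))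
    (hD : D ⊆ Set.range Sum.inr)
    (hodd : Odd ((D ∩ (bipGraph n P).neighborSet (Sum.inl i)).ncard)) :
    (XOp {w : ({Sum.inl i}ᶜ : Set (Fin n ⊕ Fin n)) | ↑w ∈ D}
      (ZOp {w : ({Sum.inl i}ᶜ : Set (Fin n ⊕ Fin n)) |
              ↑w ∈ oddNbhd (bipGraph n P) D \ {Sum.inl i}}
        (graphState (SimpleGraph.induce ({Sum.inl i}ᶜ : Set (Fin n ⊕ Fin n))
          (bipGraph n P)))) =
      graphState (SimpleGraph.induce ({Sum.inl i}ᶜ : Set (Fin n ⊕ Fin n)) (bipGraph n P))) ∧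
    (XOp {w : ({Sum.inl i}ᶜ : Set (Fin n ⊕ Fin n)) | ↑w ∈ D}
      (ZOp {w : ({Sum.inl i}ᶜ : Set (Fin n ⊕ Fin n)) |
              ↑w ∈ oddNbhd (bipGraph n P) D \ {Sum.inl i}}
        (ZOp {w : ({Sum.inl i}ᶜ : Set (Fin n ⊕ Fin n)) |
                (bipGraph n P).Adj (Sum.inl i) ↑w}
          (graphState (SimpleGraph.induce ({Sum.inl i}ᶜ : Set (Fin n ⊕ Fin n))
            (bipGraph n P))))) =
      -(ZOp {w : ({Sum.inl i}ᶜ : Set (Fin n ⊕ Fin n)) |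
                (bipGraph n P).Adj (Sum.inl i) ↑w}
          (graphState (SimpleGraph.induce ({Sum.inl i}ᶜ : Set (Fin n ⊕ Fin n))
            (bipGraph n P))))) := by
  set G := bipGraph n P
  set s : Set (Fin n ⊕ Fin n) := {Sum.inl i}ᶜ
  have hDs : D ⊆ s := fun v hv => by obtain ⟨b, rfl⟩ := hD hv; simp [s]
  have hO : {w : s | ↑w ∈ oddNbhd G D \ {Sum.inl i}} =
      oddNbhd (G.induce s) (Subtype.val ⁻¹' D) := by
    rw [oddNbhd_induce G hDs]
    ext w
    exact and_iff_left w.2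
  have hstab : XOp (Subtype.val ⁻¹' D) (ZOp (oddNbhd (G.induce s) (Subtype.val ⁻¹' D))
      (graphState (G.induce s))) = graphState (G.induce s) :=
    XOp_ZOp_oddNbhd_graphState (SimpleGraph.IsIndepSet.preimage_val_induce
      (Set.Pairwise.mono hD (isIndepSet_range_inr_bipGraph n P)))
  have hanti : Odd ({w : s | G.Adj (Sum.inl i) ↑w} ∩ Subtype.val ⁻¹' D).ncard := by
    rw [Set.inter_comm] at hodd
    exact Set.ncard_preimage_val_of_subset (Set.inter_subset_right.trans hDs) ▸ hodd
  rw [hO, show {w : s | ↑w ∈ D} = Subtype.val ⁻¹' D from rfl]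
  refine ⟨hstab, ?_⟩
  rw [ZOp_comm, XOp_ZOp, hstab, hanti.neg_one_pow, neg_one_smul]

/-- for the bipartite graph `G` of `P` with `P Pᵀ = I`, `i ∈ L`, and `D ⊆ R`
with `|D ∩ N_i|` odd, the operator `K_D′ = X_D Z_{Odd(D) \\ {i}}` (with `Odd(D)` computed in
`G`) fixes `|G \\ i⟩` and negates `Z_{N_i}|G \\ i⟩`. -/
theorem stmt10 (n : ℕ) (hn : 1 ≤ n) (P : Matrix (Fin n) (Fin n) (ZMod 2))
    (hP : P * Pᵀ = 1) (i : Fin n) (D : Set (Fin n ⊕ Fin n))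
    (hD : D ⊆ Set.range Sum.inr)
    (hodd : Odd ((D ∩ (bipGraph n P).neighborSet (Sum.inl i)).ncard)) :
    (XOp {w : ({Sum.inl i}ᶜ : Set (Fin n ⊕ Fin n)) | ↑w ∈ D}
      (ZOp {w : ({Sum.inl i}ᶜ : Set (Fin n ⊕ Fin n)) |
              ↑w ∈ oddNbhd (bipGraph n P) D \ {Sum.inl i}}
        (graphState (SimpleGraph.induce ({Sum.inl i}ᶜ : Set (Fin n ⊕ Fin n))
          (bipGraph n P)))) =
      graphState (SimpleGraph.induce ({Sum.inl i}ᶜ : Set (Fin n ⊕ Fin n)) (bipGraph n P))) ∧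
    (XOp {w : ({Sum.inl i}ᶜ : Set (Fin n ⊕ Fin n)) | ↑w ∈ D}
      (ZOp {w : ({Sum.inl i}ᶜ : Set (Fin n ⊕ Fin n)) |
              ↑w ∈ oddNbhd (bipGraph n P) D \ {Sum.inl i}}
        (ZOp {w : ({Sum.inl i}ᶜ : Set (Fin n ⊕ Fin n)) |
                (bipGraph n P).Adj (Sum.inl i) ↑w}
          (graphState (SimpleGraph.induce ({Sum.inl i}ᶜ : Set (Fin n ⊕ Fin n))
            (bipGraph n P))))) =
      -(ZOp {w : ({Sum.inl i}ᶜ : Set (Fin n ⊕ Fin n)) |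
                (bipGraph n P).Adj (Sum.inl i) ↑w}
          (graphState (SimpleGraph.induce ({Sum.inl i}ᶜ : Set (Fin n ⊕ Fin n))
            (bipGraph n P))))) :=
  stmt10_general n P i D hD hodd
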